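/- Well-posedness of the penalized problem: for any penalty parameter ρ ≥ 0 and switching cost c ≥ 0, there exists a unique u^ρ ∈ ℝ^{N×d} such that F_i(u^ρ)_l − ρ·Σ_{j≠i} π((u^ρ)^j_l − c − (u^ρ)^i_l) = 0 for all i ∈ I and l ∈ {1,…,N}, and this solution satisfies ‖u^ρ‖ ≤ ‖F(0)‖/γ. -/

import Mathlib

open Filter Topology

noncomputable section

/-- A monotone system with constant `γ`: whenever `u i l - v i l` is the (nonnegative)
maximum of all differences, `F u i l - F v i l ≥ γ (u i l - v i l)`. -/
def IsMonotoneSystem {N d : ℕ} (γ : ℝ)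
    (F : (Fin d → Fin N → ℝ) → Fin d → Fin N → ℝ) : Prop :=
  ∀ u v : Fin d → Fin N → ℝ, ∀ i : Fin d, ∀ l : Fin N,
    (∀ (j : Fin d) (k : Fin N), u j k - v j k ≤ u i l - v i l) →
    0 ≤ u i l - v i l →
    γ * (u i l - v i l) ≤ F u i l - F v i l

/-- The intervention operator `(M_i u)_l = max_{j ≠ i} (u j l - c)`. -/
def Mop {N d : ℕ} (c : ℝ) (u : Fin d → Fin N → ℝ) (i : Fin d) (l : Fin N) : ℝ :=
  ⨆ j : {j : Fin d // j ≠ i}, (u j l - c)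

/-- The sup-norm `‖u‖ = max_{i,l} |u i l|`. -/
def supNorm {N d : ℕ} (u : Fin d → Fin N → ℝ) : ℝ :=
  ⨆ p : Fin d × Fin N, |u p.1 p.2|

/-- A penalty function: continuous, non-decreasing, vanishing on `(-∞,0]` and
positive on `(0,∞)`. -/
def IsPenaltyFunction (π : ℝ → ℝ) : Prop :=
  Continuous π ∧ Monotone π ∧ (∀ y : ℝ, y ≤ 0 → π y = 0) ∧ (∀ y : ℝ, 0 < y → 0 < π y)

/-- A concave system: each `F_i` is concave (componentwise). -/
def IsConcaveSystem {N d : ℕ}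
    (F : (Fin d → Fin N → ℝ) → Fin d → Fin N → ℝ) : Prop :=
  ∀ (i : Fin d) (u v : Fin d → Fin N → ℝ) (θ : ℝ), 0 ≤ θ → θ ≤ 1 → ∀ l : Fin N,
    θ * F u i l + (1 - θ) * F v i l ≤ F (fun j k => θ * u j k + (1 - θ) * v j k) i l

/-! Both the bound and uniqueness come from the comparison principle `G u ≤ G v → u ≤ v` of a
monotone system (look at a point where `u - v` is maximal), applied against the constant
sub- and supersolutions `∓ ‖G 0‖ / γ`. Existence is Perron's method: a subsolution of maximal
total mass in the compact set of subsolutions above `-‖G 0‖ / γ` is a solution. The penalized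
operator is again a continuous monotone system with constant `γ` because `π` is non-decreasing,
and it agrees with `F` at `0` because `π` vanishes on `(-∞, 0]` and `c ≥ 0`. -/

section SupNorm

variable {N d : ℕ}

theorem abs_le_supNorm (u : Fin d → Fin N → ℝ) (i : Fin d) (l : Fin N) :
    |u i l| ≤ supNorm u :=
  le_ciSup (f := fun p : Fin d × Fin N => |u p.1 p.2|) (Set.finite_range _).bddAbove (i, l)

theorem supNorm_nonneg (u : Fin d → Fin N → ℝ) : 0 ≤ supNorm u :=
  Real.iSup_nonneg fun _ => abs_nonneg _

theorem supNorm_le {u : Fin d → Fin N → ℝ} {a : ℝ} (ha : 0 ≤ a) (h : ∀ i l, |u i l| ≤ a) :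
    supNorm u ≤ a :=
  Real.iSup_le (fun p => h p.1 p.2) ha

end SupNorm

namespace IsMonotoneSystem

variable {N d : ℕ} {γ : ℝ} {G : (Fin d → Fin N → ℝ) → Fin d → Fin N → ℝ}

/-- Degenerate ellipticity. -/
theorem apply_le_of_le_of_eq (hG : IsMonotoneSystem γ G) {u v : Fin d → Fin N → ℝ}
    (huv : u ≤ v) {i : Fin d} {l : Fin N} (hil : u i l = v i l) : G v i l ≤ G u i l := by
  have := hG u v i l (fun j k => by linarith [huv j k]) (by linarith)
  rw [hil, sub_self, mul_zero] at this
  linarith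

theorem le_apply_add_const (hG : IsMonotoneSystem γ G) (u : Fin d → Fin N → ℝ) {a : ℝ}
    (ha : 0 ≤ a) (i : Fin d) (l : Fin N) : G u i l + γ * a ≤ G (fun j k => u j k + a) i l := by
  have := hG (fun j k => u j k + a) u i l (fun j k => by simp) (by simpa using ha)
  simp only [add_sub_cancel_left] at this
  linarith

theorem le_of_le (hγ : 0 < γ) (hG : IsMonotoneSystem γ G) {u v : Fin d → Fin N → ℝ}
    (h : G u ≤ G v) : u ≤ v := by
  intro i l
  have : Nonempty (Fin d × Fin N) := ⟨(i, l)⟩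
  obtain ⟨p, hp⟩ := Finite.exists_max fun p : Fin d × Fin N => u p.1 p.2 - v p.1 p.2
  by_contra hlt
  have hpos : 0 < u p.1 p.2 - v p.1 p.2 := lt_of_lt_of_le (by linarith) (hp (i, l))
  have := hG u v p.1 p.2 (fun j k => hp (j, k)) hpos.le
  nlinarith [h p.1 p.2]

theorem eq_of_eq_zero (hγ : 0 < γ) (hG : IsMonotoneSystem γ G) {u v : Fin d → Fin N → ℝ}
    (hu : G u = 0) (hv : G v = 0) : u = v :=
  le_antisymm (hG.le_of_le hγ (hu.trans hv.symm).le) (hG.le_of_le hγ (hv.trans hu.symm).le)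

theorem nonneg_apply_const (hγ : 0 < γ) (hG : IsMonotoneSystem γ G) :
    0 ≤ G (fun _ _ => supNorm (G 0) / γ) := by
  intro i l
  have := hG.le_apply_add_const 0 (div_nonneg (supNorm_nonneg (G 0)) hγ.le) i l
  rw [mul_div_cancel₀ _ hγ.ne'] at this
  simpa using (neg_le_of_abs_le (abs_le_supNorm (G 0) i l)).trans
    (le_sub_iff_add_le.mpr this)

theorem apply_const_nonpos (hγ : 0 < γ) (hG : IsMonotoneSystem γ G) :
    G (fun _ _ => -(supNorm (G 0) / γ)) ≤ 0 := by
  intro i l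
  have := hG.le_apply_add_const (fun _ _ => -(supNorm (G 0) / γ))
    (div_nonneg (supNorm_nonneg (G 0)) hγ.le) i l
  rw [mul_div_cancel₀ _ hγ.ne'] at this
  simp only [neg_add_cancel] at this
  simpa using this.trans (le_of_abs_le (abs_le_supNorm (G 0) i l))

theorem supNorm_le_of_eq_zero (hγ : 0 < γ) (hG : IsMonotoneSystem γ G)
    {u : Fin d → Fin N → ℝ} (hu : G u = 0) : supNorm u ≤ supNorm (G 0) / γ := by
  refine supNorm_le (div_nonneg (supNorm_nonneg _) hγ.le) fun i l => abs_le.mpr ⟨?_, ?_⟩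
  · exact hG.le_of_le hγ ((hG.apply_const_nonpos hγ).trans hu.ge) i l
  · exact hG.le_of_le hγ (hu.le.trans (hG.nonneg_apply_const hγ)) i l

theorem exists_eq_zero (hγ : 0 < γ) (hGc : Continuous G) (hG : IsMonotoneSystem γ G) :
    ∃ u, G u = 0 := by
  set R := supNorm (G 0) / γ
  -- Subsolutions above `-R` lie below `R`, so they form a compact set.
  set S : Set (Fin d → Fin N → ℝ) := {u | (fun _ _ => -R) ≤ u ∧ G u ≤ 0}
  have hS : IsCompact S :=
    isCompact_Icc.of_isClosed_subset (isClosed_Ici.inter (isClosed_Iic.preimage hGc))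
      fun u hu => ⟨hu.1, hG.le_of_le hγ (hu.2.trans (hG.nonneg_apply_const hγ))⟩
  obtain ⟨U, ⟨hUlow, hUsub⟩, hUmax⟩ := hS.exists_isMaxOn ⟨_, le_rfl, hG.apply_const_nonpos hγ⟩
    (show Continuous fun u : Fin d → Fin N → ℝ => ∑ j, ∑ k, u j k by fun_prop).continuousOn
  -- Where `G U i l < 0`, raising `U i l` slightly keeps a subsolution (ellipticity elsewhere,
  -- continuity at `(i, l)`) of larger total mass.
  refine ⟨U, le_antisymm hUsub fun i l => not_lt.mp fun hneg => ?_⟩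
  set bump : ℝ → Fin d → Fin N → ℝ := fun t j k => U j k + if j = i ∧ k = l then t else 0
  have hbump_cont : Continuous fun t => G (bump t) i l :=
    (continuous_apply_apply i l).comp <| hGc.comp <| continuous_pi fun j => continuous_pi fun k =>
      continuous_const.add (by split_ifs <;> fun_prop)
  have hbump0 : bump 0 = U := by ext j k; simp [bump]
  obtain ⟨t, ht, hGt⟩ : ∃ t > 0, G (bump t) i l < 0 := by
    have := (hbump_cont.tendsto 0).eventually_lt_const (by simpa [hbump0] using hneg)
    have hright := this.filter_mono (nhdsWithin_le_nhds (s := Set.Ioi 0))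
    exact (hright.and self_mem_nhdsWithin).exists.imp fun t ht => ⟨ht.2, ht.1⟩
  have hUle : U ≤ bump t := fun j k => by simp only [bump]; split_ifs <;> linarith
  have hmem : bump t ∈ S := by
    refine ⟨hUlow.trans hUle, fun j k => ?_⟩
    by_cases hjk : j = i ∧ k = l
    · obtain ⟨rfl, rfl⟩ := hjk
      exact hGt.le
    · exact (hG.apply_le_of_le_of_eq hUle (by simp [bump, hjk])).trans (hUsub j k)
  have hsum : ∑ j, ∑ k, bump t j k = ∑ j, ∑ k, U j k + t := by
    simp [bump, Finset.sum_add_distrib, ite_and]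
  linarith [show ∑ j, ∑ k, bump t j k ≤ ∑ j, ∑ k, U j k from hUmax hmem]

end IsMonotoneSystem

section Penalized

variable {N d : ℕ}

def penalizedOp (F : (Fin d → Fin N → ℝ) → Fin d → Fin N → ℝ) (π : ℝ → ℝ) (ρ c : ℝ)
    (u : Fin d → Fin N → ℝ) : Fin d → Fin N → ℝ :=
  fun i l => F u i l - ρ * ∑ j ∈ Finset.univ.erase i, π (u j l - c - u i l)

variable {F : (Fin d → Fin N → ℝ) → Fin d → Fin N → ℝ} {π : ℝ → ℝ} {ρ c : ℝ}

theorem Continuous.penalizedOp (hF : Continuous F) (hπ : Continuous π) :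
    Continuous (penalizedOp F π ρ c) :=
  continuous_pi fun i => continuous_pi fun l =>
    ((continuous_apply_apply i l).comp hF).sub <| continuous_const.mul <|
      continuous_finsetSum _ fun j _ => hπ.comp (by fun_prop)

theorem IsMonotoneSystem.penalizedOp {γ : ℝ} (hF : IsMonotoneSystem γ F) (hπ : Monotone π)
    (hρ : 0 ≤ ρ) : IsMonotoneSystem γ (penalizedOp F π ρ c) := by
  intro u v i l hmax hpos
  have hsum : ∑ j ∈ Finset.univ.erase i, π (u j l - c - u i l)
      ≤ ∑ j ∈ Finset.univ.erase i, π (v j l - c - v i l) :=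
    Finset.sum_le_sum fun j _ => hπ (by linarith [hmax j l])
  have := hF u v i l hmax hpos
  simp only [_root_.penalizedOp]
  nlinarith

theorem penalizedOp_zero (hπ : ∀ y ≤ 0, π y = 0) (hc : 0 ≤ c) :
    penalizedOp F π ρ c 0 = F 0 := by
  ext i l
  simp [_root_.penalizedOp, hπ (-c) (neg_nonpos.mpr hc)]

end Penalized

theorem penalized_wellposedness_general {N d : ℕ}
    (γ : ℝ) (hγ : 0 < γ)
    (F : (Fin d → Fin N → ℝ) → Fin d → Fin N → ℝ)
    (hFcont : Continuous F) (hFmono : IsMonotoneSystem γ F)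
    (π : ℝ → ℝ) (hπ : IsPenaltyFunction π)
    (ρ : ℝ) (hρ : 0 ≤ ρ) (c : ℝ) (hc : 0 ≤ c) :
    ∃ uρ : Fin d → Fin N → ℝ,
      (∀ i l, F uρ i l - ρ * ∑ j ∈ Finset.univ.erase i, π (uρ j l - c - uρ i l) = 0) ∧
      supNorm uρ ≤ supNorm (F 0) / γ ∧
      ∀ v : Fin d → Fin N → ℝ,
        (∀ i l, F v i l - ρ * ∑ j ∈ Finset.univ.erase i, π (v j l - c - v i l) = 0) →
        v = uρ := by
  obtain ⟨hπcont, hπmono, hπzero, -⟩ := hπ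
  have hG : IsMonotoneSystem γ (penalizedOp F π ρ c) := hFmono.penalizedOp hπmono hρ
  obtain ⟨u, hu⟩ := hG.exists_eq_zero hγ (hFcont.penalizedOp hπcont)
  refine ⟨u, fun i l => congrFun₂ hu i l, ?_, fun v hv => hG.eq_of_eq_zero hγ (funext₂ hv) hu⟩
  simpa only [penalizedOp_zero hπzero hc] using hG.supNorm_le_of_eq_zero hγ hu

/-- Well-posedness of the penalized problem: existence, uniqueness and a priori bound. -/
theorem penalized_wellposedness {N d : ℕ} (hN : 1 ≤ N) (hd : 2 ≤ d)
    (γ : ℝ) (hγ : 0 < γ)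
    (F : (Fin d → Fin N → ℝ) → Fin d → Fin N → ℝ)
    (hFcont : Continuous F) (hFmono : IsMonotoneSystem γ F)
    (π : ℝ → ℝ) (hπ : IsPenaltyFunction π)
    (ρ : ℝ) (hρ : 0 ≤ ρ) (c : ℝ) (hc : 0 ≤ c) :
    ∃ uρ : Fin d → Fin N → ℝ,
      (∀ i l, F uρ i l - ρ * ∑ j ∈ Finset.univ.erase i, π (uρ j l - c - uρ i l) = 0) ∧
      supNorm uρ ≤ supNorm (F 0) / γ ∧
      ∀ v : Fin d → Fin N → ℝ,
        (∀ i l, F v i l - ρ * ∑ j ∈ Finset.univ.erase i, π (v j l - c - v i l) = 0) →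
        v = uρ :=
  penalized_wellposedness_general γ hγ F hFcont hFmono π hπ ρ hρ c hc
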